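/- The subgroups of order 2 of the Whitten group Γ₂ fall into exactly 7 conjugacy classes under conjugation by elements of Γ₂. -/
import Mathlib


/-- The homomorphism `ω : S_μ → Aut(Z₂^{μ+1})`: a permutation `p` fixes the 0th
coordinate (indexed by `none`) and permutes the remaining `μ` coordinates
(indexed by `some i`). -/
def whittenHom (μ : ℕ) :
    Equiv.Perm (Fin μ) →* MulAut (Option (Fin μ) → Multiplicative (ZMod 2)) where
  toFun p := MulEquiv.arrowCongr (Equiv.optionCongr p) (MulEquiv.refl _)
  map_one' := by
    ext f x
    cases x <;> rfl
  map_mul' := by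
    intro p q
    ext f x
    cases x <;> rfl

/-- The Whitten group `Γ_μ = Z₂^{μ+1} ⋊_ω S_μ`. -/
abbrev WhittenGroup (μ : ℕ) : Type :=
  (Option (Fin μ) → Multiplicative (ZMod 2)) ⋊[whittenHom μ] Equiv.Perm (Fin μ)

/-- Two subgroups are conjugate if one is carried to the other by conjugation. -/
def subgroupConj {G : Type*} [Group G] (H K : Subgroup G) : Prop :=
  ∃ γ : G, Subgroup.map (MulAut.conj γ).toMonoidHom H = K

/-! ### Auxiliary computable instances -/

def sdpEquiv {N G : Type*} [Group N] [Group G] (φ : G →* MulAut N) :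
    SemidirectProduct N G φ ≃ N × G where
  toFun x := (x.left, x.right)
  invFun p := ⟨p.1, p.2⟩
  left_inv _ := rfl
  right_inv _ := rfl

instance sdpFintype {N G : Type*} [Group N] [Group G] (φ : G →* MulAut N)
    [Fintype N] [Fintype G] : Fintype (SemidirectProduct N G φ) :=
  Fintype.ofEquiv _ (sdpEquiv φ).symm

instance sdpDecEq {N G : Type*} [Group N] [Group G] (φ : G →* MulAut N)
    [DecidableEq N] [DecidableEq G] : DecidableEq (SemidirectProduct N G φ) := fun a b =>
  decidable_of_iff (a.left = b.left ∧ a.right = b.right)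
    (by cases a; cases b; simp [SemidirectProduct.ext_iff])

lemma perm_fin2 (p : Equiv.Perm (Fin 2)) : p = 1 ∨ p = Equiv.swap 0 1 := by
  have h2 : ∀ x : Fin 2, x = 0 ∨ x = 1 := by decide
  rcases h2 (p 0) with h | h
  · left; ext i
    rcases h2 i with rfl | rfl
    · simp only [Equiv.Perm.coe_one, id_eq]; exact congrArg Fin.val h
    · rcases h2 (p 1) with h1 | h1
      · exact absurd (p.injective (h1.trans h.symm)) (by decide)
      · simp only [Equiv.Perm.coe_one, id_eq]; exact congrArg Fin.val h1
  · right; ext i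
    rcases h2 i with rfl | rfl
    · rw [Equiv.swap_apply_left]; exact congrArg Fin.val h
    · rcases h2 (p 1) with h1 | h1
      · rw [Equiv.swap_apply_right]; exact congrArg Fin.val h1
      · exact absurd (p.injective (h1.trans h.symm)) (by decide)

instance permFin2Fintype : Fintype (Equiv.Perm (Fin 2)) where
  elems := {1, Equiv.swap 0 1}
  complete := by
    intro p
    rcases perm_fin2 p with rfl | rfl <;> simp [Finset.mem_insert]

/-! ### Involutions and conjugacy -/

def Inv2 := {x : WhittenGroup 2 // x * x = 1 ∧ x ≠ 1}

instance : Fintype Inv2 := by unfold Inv2; infer_instance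

instance : DecidableEq Inv2 := by unfold Inv2; infer_instance

def conjRel (x y : Inv2) : Prop := ∃ g : WhittenGroup 2, g * x.1 * g⁻¹ = y.1

instance : DecidableRel conjRel := fun x y => by unfold conjRel; infer_instance

instance conjSetoid : Setoid Inv2 where
  r := conjRel
  iseqv := by
    constructor
    · intro x; exact ⟨1, by simp⟩
    · rintro x y ⟨g, hg⟩; exact ⟨g⁻¹, by rw [← hg]; group⟩
    · rintro x y z ⟨g, hg⟩ ⟨h, hh⟩; exact ⟨h * g, by rw [← hh, ← hg]; group⟩

instance (x y : Inv2) : Decidable (x ≈ y) := by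
  show Decidable (conjRel x y); infer_instance

set_option maxHeartbeats 4000000 in
lemma card_quotient_conjSetoid : Fintype.card (Quotient conjSetoid) = 7 := by decide

/-! ### Glue between involutions and order-2 subgroups -/

section Glue

variable {G : Type*} [Group G] [Finite G]

lemma orderOf_eq_two_of (x : G) (h1 : x * x = 1) (h2 : x ≠ 1) : orderOf x = 2 :=
  orderOf_eq_prime (by rwa [pow_two]) h2

lemma card_zpowers_eq_two (x : G) (h1 : x * x = 1) (h2 : x ≠ 1) :
    Nat.card (Subgroup.zpowers x) = 2 := by
  rw [Nat.card_zpowers, orderOf_eq_two_of x h1 h2]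

lemma gen_eq_of_zpowers_eq {a b : G} (ha1 : a * a = 1) (ha2 : a ≠ 1) (hb2 : b ≠ 1)
    (h : Subgroup.zpowers a = Subgroup.zpowers b) : a = b := by
  have hb : b ∈ Subgroup.zpowers a := h ▸ Subgroup.mem_zpowers b
  obtain ⟨n, hn⟩ := mem_powers_iff_mem_zpowers.mpr hb
  have horder : orderOf a = 2 := orderOf_eq_two_of a ha1 ha2
  have hn' : a ^ n = b := hn
  have hmod : a ^ (n % 2) = b := by rw [← horder, pow_mod_orderOf, hn']
  have : n % 2 = 0 ∨ n % 2 = 1 := Nat.mod_two_eq_zero_or_one n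
  rcases this with h0 | h0
  · rw [h0, pow_zero] at hmod; exact absurd hmod.symm hb2
  · rw [h0, pow_one] at hmod; exact hmod

lemma subgroup_card_two_eq_zpowers (H : Subgroup G) (hH : Nat.card H = 2) :
    ∃ x : G, x * x = 1 ∧ x ≠ 1 ∧ Subgroup.zpowers x = H := by
  have hne : H ≠ ⊥ := by
    intro hbot
    rw [hbot, Subgroup.card_bot] at hH
    omega
  obtain ⟨⟨x, hxH⟩, hx1⟩ := Subgroup.ne_bot_iff_exists_ne_one.mp hne
  have hx1' : x ≠ 1 := by
    intro h
    exact hx1 (Subtype.ext h)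
  have hdvd : orderOf (⟨x, hxH⟩ : H) ∣ 2 := hH ▸ orderOf_dvd_natCard _
  have horder : orderOf x = 2 := by
    have : orderOf (⟨x, hxH⟩ : H) = orderOf x := (Subgroup.orderOf_coe _).symm
    rw [← this]
    rcases (Nat.prime_two.eq_one_or_self_of_dvd _ hdvd) with h | h
    · exact absurd (orderOf_eq_one_iff.mp h) hx1
    · exact h
  refine ⟨x, ?_, hx1', ?_⟩
  · rw [← pow_two]
    rw [← horder]
    exact pow_orderOf_eq_one x
  · apply Subgroup.eq_of_le_of_card_ge (Subgroup.zpowers_le.mpr hxH)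
    rw [hH, Nat.card_zpowers, horder]

lemma map_conj_zpowers (γ x : G) :
    Subgroup.map (MulAut.conj γ).toMonoidHom (Subgroup.zpowers x) =
      Subgroup.zpowers (γ * x * γ⁻¹) := by
  rw [MonoidHom.map_zpowers]
  rfl

end Glue

/-! ### The theorem -/

abbrev Sub2 := {H : Subgroup (WhittenGroup 2) // Nat.card H = 2}

def invToSub (x : Inv2) : Sub2 :=
  ⟨Subgroup.zpowers x.1, card_zpowers_eq_two x.1 x.2.1 x.2.2⟩

lemma subRel_equivalence :
    Equivalence (fun H K : Sub2 => subgroupConj H.1 K.1) := by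
  constructor
  · intro H
    refine ⟨1, ?_⟩
    ext x
    simp [Subgroup.mem_map_equiv]
  · rintro H K ⟨γ, hγ⟩
    refine ⟨γ⁻¹, ?_⟩
    rw [← hγ]
    ext x
    simp only [Subgroup.mem_map_equiv, MulAut.conj_symm_apply]
    have : γ⁻¹ * (γ⁻¹⁻¹ * x * γ⁻¹) * γ = x := by group
    rw [this]
  · rintro H K L ⟨γ, hγ⟩ ⟨δ, hδ⟩
    refine ⟨δ * γ, ?_⟩
    rw [← hδ, ← hγ]
    ext x
    simp only [Subgroup.mem_map_equiv, MulAut.conj_symm_apply]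
    have : γ⁻¹ * (δ⁻¹ * x * δ) * γ = (δ * γ)⁻¹ * x * (δ * γ) := by group
    rw [this]

def quotMap : Quotient conjSetoid →
    Quot (fun H K : Sub2 => subgroupConj H.1 K.1) :=
  Quot.map invToSub (by
    rintro x y ⟨g, hg⟩
    refine ⟨g, ?_⟩
    show Subgroup.map _ (Subgroup.zpowers x.1) = Subgroup.zpowers y.1
    rw [map_conj_zpowers, hg])

lemma quotMap_bijective : Function.Bijective quotMap := by
  constructor
  · rintro ⟨x⟩ ⟨y⟩ h
    have h' : Relation.EqvGen (fun H K : Sub2 => subgroupConj H.1 K.1)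
        (invToSub x) (invToSub y) := Quot.eq.mp h
    rw [subRel_equivalence.eqvGen_iff] at h'
    obtain ⟨γ, hγ⟩ := h'
    have hγ' : Subgroup.zpowers (γ * x.1 * γ⁻¹) = Subgroup.zpowers y.1 := by
      rw [← map_conj_zpowers]
      exact hγ
    have hconj : γ * x.1 * γ⁻¹ = y.1 := by
      apply gen_eq_of_zpowers_eq _ _ y.2.2 hγ'
      · calc (γ * x.1 * γ⁻¹) * (γ * x.1 * γ⁻¹) = γ * (x.1 * x.1) * γ⁻¹ := by group
          _ = 1 := by rw [x.2.1]; group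
      · intro h1
        apply x.2.2
        have hx : x.1 = γ⁻¹ * (γ * x.1 * γ⁻¹) * γ := by group
        rw [hx, h1]; group
    exact Quot.sound ⟨γ, hconj⟩
  · rintro ⟨H⟩
    obtain ⟨x, hx1, hx2, hx3⟩ := subgroup_card_two_eq_zpowers H.1 H.2
    refine ⟨Quotient.mk conjSetoid ⟨x, hx1, hx2⟩, ?_⟩
    show Quot.mk _ (invToSub ⟨x, hx1, hx2⟩) = Quot.mk _ H
    congr 1
    exact Subtype.ext hx3

/-- The subgroups of order 2 of the Whitten group Γ₂ fall into
exactly 7 conjugacy classes under conjugation by elements of Γ₂. -/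
theorem whittenGroup_two_subgroups_order_2_up_to_conj :
    Nat.card (Quot fun H K : {H : Subgroup (WhittenGroup 2) // Nat.card H = 2} =>
      subgroupConj H.1 K.1) = 7 := by
  rw [← Nat.card_eq_of_bijective quotMap quotMap_bijective,
    Nat.card_eq_fintype_card, card_quotient_conjSetoid]
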